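/- Let (X,‖·‖,τ) be a sequentially complete Saks space, υ a Hausdorff locally convex topology on X generated by a norming directed system Γ_υ of continuous seminorms, and (A,D(A)) a Γ_υ-dissipative linear operator on X. Then λ−A is surjective for some λ>0 if and only if λ−A is surjective for all λ>0; in this case (0,∞) ⊆ ρ(A), i.e. for every λ>0 the inverse (λ−A)^{-1} exists on all of X and is norm-continuous. -/

import Mathlib

/-!
Because `Γυ` is norming, `Γυ`-dissipativity gives the norm estimate `λ‖x‖ ≤ ‖(λ - A)x‖`, so every
`λ - A` with `λ > 0` is injective with a right inverse of norm at most `λ⁻¹` wherever it is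
surjective. Writing `λ - A = (λ₀ - A) + (λ - λ₀)`, a Banach fixed point argument transfers
surjectivity from `λ₀` to every `λ ∈ (0, 2λ₀)`, and finitely many such steps reach any `λ > 0`.
-/

open Filter Topology Set

namespace LumerPhillips

variable {X : Type*}

section Defs

variable [NormedAddCommGroup X] [NormedSpace ℝ X]

/-- A directed set of seminorms. -/
def DirectedSeminorms (Γ : Set (Seminorm ℝ X)) : Prop :=
  ∀ p ∈ Γ, ∀ q ∈ Γ, ∃ r ∈ Γ, p ≤ r ∧ q ≤ r

/-- `Γ` is a system of `t`-continuous seminorms generating the topology `t`, i.e. `t` is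
the locally convex topology induced by the seminorms in `Γ`. -/
def GeneratesTop (Γ : Set (Seminorm ℝ X)) (t : TopologicalSpace X) : Prop :=
  (∀ p ∈ Γ, @Continuous X ℝ t _ p) ∧
    t = ⨅ p : Γ,
      (p : Seminorm ℝ X).toSeminormedAddCommGroup.toUniformSpace.toTopologicalSpace

/-- `Γ` is norming: the norm is the pointwise supremum of the seminorms in `Γ`. -/
def NormingSeminorms (Γ : Set (Seminorm ℝ X)) : Prop :=
  ∀ x : X, ‖x‖ = ⨆ p : Γ, (p : Seminorm ℝ X) x

/-- `(X,‖·‖,τ)` is a Saks space witnessed by the norming directed system `Γ` of τ-continuous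
seminorms generating `τ`; `τ` is a Hausdorff locally convex topology coarser than the norm
topology. -/
def IsSaksSystem (τ : TopologicalSpace X) (Γ : Set (Seminorm ℝ X)) : Prop :=
  @T2Space X τ ∧ @LocallyConvexSpace ℝ X _ _ _ _ τ ∧
    (inferInstance : TopologicalSpace X) ≤ τ ∧
    DirectedSeminorms Γ ∧ GeneratesTop Γ τ ∧ NormingSeminorms Γ

/-- `t` is a linear (vector space) topology on `X`. -/
def IsLinearTop (t : TopologicalSpace X) : Prop :=
  @IsTopologicalAddGroup X t _ ∧ @ContinuousSMul ℝ X _ _ t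

/-- The topologies `t` and `s` agree (as subspace topologies) on every norm-bounded set. -/
def AgreeOnBoundedSets (t s : TopologicalSpace X) : Prop :=
  ∀ S : Set X, Bornology.IsBounded S →
    TopologicalSpace.induced ((↑) : S → X) t = TopologicalSpace.induced ((↑) : S → X) s

/-- `γ` is the mixed topology `γ(‖·‖,τ)`: the finest linear topology that agrees with `τ` on
norm-bounded sets and lies between `τ` and the norm topology. (Recall that in Mathlib's order
on topologies, `t ≤ s` means `t` is finer than `s`.) -/
def IsMixedTopology (τ γ : TopologicalSpace X) : Prop :=
  (IsLinearTop γ ∧ γ ≤ τ ∧ (inferInstance : TopologicalSpace X) ≤ γ ∧ AgreeOnBoundedSets γ τ) ∧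
    ∀ t : TopologicalSpace X, IsLinearTop t → t ≤ τ →
      (inferInstance : TopologicalSpace X) ≤ t → AgreeOnBoundedSets t τ → γ ≤ t

/-- `u` is a Cauchy sequence for the (group) topology `t`. -/
def CauchySeqTop (t : TopologicalSpace X) (u : ℕ → X) : Prop :=
  ∀ V ∈ @nhds X t 0, ∃ N : ℕ, ∀ m ≥ N, ∀ n ≥ N, u m - u n ∈ V

/-- `(X,t)` is sequentially complete. -/
def SeqCompleteTop (t : TopologicalSpace X) : Prop :=
  ∀ u : ℕ → X, CauchySeqTop t u → ∃ x : X, Filter.Tendsto u atTop (@nhds X t x)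

/-- `(X,t)` is complete (every Cauchy filter for the group uniformity of `t` converges). -/
def CompleteTop (t : TopologicalSpace X) : Prop :=
  ∀ F : Filter X, F.NeBot →
    (∀ V ∈ @nhds X t 0, ∃ S ∈ F, ∀ x ∈ S, ∀ y ∈ S, x - y ∈ V) →
    ∃ x : X, F ≤ @nhds X t x

/-- The map `λ - A` on the domain `D` of the linear operator `A`. -/
def lmap (D : Submodule ℝ X) (A : D →ₗ[ℝ] X) (l : ℝ) : D → X :=
  fun x => l • (x : X) - A x

/-- The operator `(A, D)` is `Γ`-dissipative: `p((λ - A)x) ≥ λ p(x)` for all `λ > 0`,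
`x ∈ D` and `p ∈ Γ`. -/
def GammaDissipative (Γ : Set (Seminorm ℝ X)) (D : Submodule ℝ X) (A : D →ₗ[ℝ] X) : Prop :=
  ∀ l : ℝ, 0 < l → ∀ x : D, ∀ p ∈ Γ, l * p (x : X) ≤ p (lmap D A l x)

/-- The range of `λ - A`. -/
def opRange (D : Submodule ℝ X) (A : D →ₗ[ℝ] X) (l : ℝ) : Set X :=
  Set.range (lmap D A l)

/-- The graph of the operator `(A, D)`. -/
def graphSet (D : Submodule ℝ X) (A : D →ₗ[ℝ] X) : Set (X × X) :=
  {p : X × X | ∃ x : D, p = ((x : X), A x)}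

/-- The operator `(A, D)` is `t`-closed (equivalently: its graph is closed for the product
topology, which is the net formulation of closedness). -/
def ClosedOp (t : TopologicalSpace X) (D : Submodule ℝ X) (A : D →ₗ[ℝ] X) : Prop :=
  @IsClosed (X × X) (@instTopologicalSpaceProd X X t t) (graphSet D A)

/-- The operator `(A, D)` is sequentially `t`-closed. -/
def SeqClosedOp (t : TopologicalSpace X) (D : Submodule ℝ X) (A : D →ₗ[ℝ] X) : Prop :=
  ∀ (u : ℕ → D) (x y : X),
    Filter.Tendsto (fun n => (u n : X)) atTop (@nhds X t x) →
    Filter.Tendsto (fun n => A (u n)) atTop (@nhds X t y) →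
    ∃ hx : x ∈ D, A ⟨x, hx⟩ = y

/-- `(A', D')` is an extension of `(A, D)`. -/
def ExtensionOp (D : Submodule ℝ X) (A : D →ₗ[ℝ] X)
    (D' : Submodule ℝ X) (A' : D' →ₗ[ℝ] X) : Prop :=
  ∃ h : D ≤ D', ∀ x : D, A' ⟨(x : X), h x.2⟩ = A x

/-- `(A', D')` is the `t`-closure of `(A, D)`: the smallest `t`-closed extension. -/
def IsClosureOp (t : TopologicalSpace X) (D : Submodule ℝ X) (A : D →ₗ[ℝ] X)
    (D' : Submodule ℝ X) (A' : D' →ₗ[ℝ] X) : Prop :=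
  ExtensionOp D A D' A' ∧ ClosedOp t D' A' ∧
    ∀ (D'' : Submodule ℝ X) (A'' : D'' →ₗ[ℝ] X),
      ExtensionOp D A D'' A'' → ClosedOp t D'' A'' → ExtensionOp D' A' D'' A''

/-- `T` is a semigroup of linear operators which is strongly continuous for the topology `t`. -/
def IsSemigroupOn (t : TopologicalSpace X) (T : ℝ → X →ₗ[ℝ] X) : Prop :=
  T 0 = LinearMap.id ∧ (∀ s u : ℝ, 0 ≤ s → 0 ≤ u → T (s + u) = (T s).comp (T u)) ∧
    ∀ x : X, @ContinuousOn ℝ X _ t (fun s => T s x) (Set.Ici 0)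

/-- `T` is equicontinuous with respect to the system of seminorms `Γ`. -/
def EquicontOn (Γ : Set (Seminorm ℝ X)) (T : ℝ → X →ₗ[ℝ] X) : Prop :=
  ∀ p ∈ Γ, ∃ q ∈ Γ, ∃ C : ℝ, 0 ≤ C ∧ ∀ s : ℝ, 0 ≤ s → ∀ x : X, p (T s x) ≤ C * q x

/-- `T` is a contraction semigroup: `‖T(t)‖ ≤ 1` for all `t ≥ 0`. -/
def ContractionSG (T : ℝ → X →ₗ[ℝ] X) : Prop :=
  ∀ s : ℝ, 0 ≤ s → ∀ x : X, ‖T s x‖ ≤ ‖x‖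

/-- `T` is `(‖·‖,τ)`-equitight with respect to the system of seminorms `Γτ` generating `τ`. -/
def EquitightSG (Γτ : Set (Seminorm ℝ X)) (T : ℝ → X →ₗ[ℝ] X) : Prop :=
  ∀ ε : ℝ, 0 < ε → ∀ p ∈ Γτ, ∃ q ∈ Γτ, ∃ C : ℝ, 0 ≤ C ∧
    ∀ s : ℝ, 0 ≤ s → ∀ x : X, p (T s x) ≤ C * q x + ε * ‖x‖

/-- `T` is a `τ`-bi-continuous semigroup. -/
def IsBiContSG (τ : TopologicalSpace X) (T : ℝ → X →ₗ[ℝ] X) : Prop :=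
  IsSemigroupOn τ T ∧
    (∃ M : ℝ, 1 ≤ M ∧ ∃ ω : ℝ, ∀ s : ℝ, 0 ≤ s → ∀ x : X,
      ‖T s x‖ ≤ M * Real.exp (ω * s) * ‖x‖) ∧
    ∀ (x : ℕ → X) (x₀ : X), (∃ C : ℝ, ∀ n, ‖x n‖ ≤ C) →
      Filter.Tendsto x atTop (@nhds X τ x₀) →
      ∀ t₀ : ℝ, 0 < t₀ → ∀ V ∈ @nhds X τ 0,
        ∃ N : ℕ, ∀ n ≥ N, ∀ s ∈ Set.Icc (0 : ℝ) t₀, T s (x n - x₀) ∈ V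

/-- `(A, D)` is the generator of the `τ`-bi-continuous semigroup `T`. -/
def IsGeneratorBi (τ : TopologicalSpace X) (T : ℝ → X →ₗ[ℝ] X)
    (D : Submodule ℝ X) (A : D →ₗ[ℝ] X) : Prop :=
  (∀ x : X, x ∈ D ↔
      ((∃ y : X, Filter.Tendsto (fun s : ℝ => s⁻¹ • (T s x - x)) (𝓝[>] (0 : ℝ))
          (@nhds X τ y)) ∧
        ∃ C : ℝ, ∀ s ∈ Set.Ioc (0 : ℝ) 1, ‖T s x - x‖ ≤ C * s)) ∧
    ∀ x : D, Filter.Tendsto (fun s : ℝ => s⁻¹ • (T s (x : X) - (x : X))) (𝓝[>] (0 : ℝ))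
      (@nhds X τ (A x))

/-- `(A, D)` is the generator of the `t`-strongly continuous semigroup `T` (locally convex
setting). -/
def IsGeneratorLC (t : TopologicalSpace X) (T : ℝ → X →ₗ[ℝ] X)
    (D : Submodule ℝ X) (A : D →ₗ[ℝ] X) : Prop :=
  (∀ x : X, x ∈ D ↔
      ∃ y : X, Filter.Tendsto (fun s : ℝ => s⁻¹ • (T s x - x)) (𝓝[>] (0 : ℝ)) (@nhds X t y)) ∧
    ∀ x : D, Filter.Tendsto (fun s : ℝ => s⁻¹ • (T s (x : X) - (x : X))) (𝓝[>] (0 : ℝ))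
      (@nhds X t (A x))

/-- `D` is bi-dense in `X`: every point is the `τ`-limit of a norm-bounded sequence in `D`. -/
def BiDenselyDefined (τ : TopologicalSpace X) (D : Submodule ℝ X) : Prop :=
  ∀ x : X, ∃ u : ℕ → D, (∃ C : ℝ, ∀ n, ‖(u n : X)‖ ≤ C) ∧
    Filter.Tendsto (fun n => (u n : X)) atTop (@nhds X τ x)

/-- The seminorms `|||x||| = sup_n p_n(x) a_n` with `(p_n) ⊆ Γτ` and `(a_n)` a non-negative
real null sequence; they generate the submixed topology `γ_s`. -/
def SubmixedSet (Γτ : Set (Seminorm ℝ X)) : Set (Seminorm ℝ X) :=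
  {q : Seminorm ℝ X | ∃ (pn : ℕ → Seminorm ℝ X) (an : ℕ → ℝ),
      (∀ n, pn n ∈ Γτ) ∧ (∀ n, 0 ≤ an n) ∧ Filter.Tendsto an atTop (nhds 0) ∧
      ∀ x : X, q x = ⨆ n : ℕ, pn n x * an n}

/-- The subfamily of submixed seminorms with coefficients `0 ≤ a_n ≤ 1`. -/
def SubmixedSetOne (Γτ : Set (Seminorm ℝ X)) : Set (Seminorm ℝ X) :=
  {q : Seminorm ℝ X | ∃ (pn : ℕ → Seminorm ℝ X) (an : ℕ → ℝ),
      (∀ n, pn n ∈ Γτ) ∧ (∀ n, 0 ≤ an n ∧ an n ≤ 1) ∧ Filter.Tendsto an atTop (nhds 0) ∧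
      ∀ x : X, q x = ⨆ n : ℕ, pn n x * an n}

/-- The dual norm of a linear functional (as the supremum over the closed unit ball). -/
noncomputable def dualNormF (f : X →ₗ[ℝ] ℝ) : ℝ :=
  ⨆ x : {x : X // ‖x‖ ≤ 1}, |f x|

/-- The weak topology `σ(X, (X,t)')`. -/
def weakTopOf (t : TopologicalSpace X) : TopologicalSpace X :=
  ⨅ f : {f : X →ₗ[ℝ] ℝ // @Continuous X ℝ t _ f},
    TopologicalSpace.induced (⇑f.1) inferInstance

/-- `(X,t)` is semi-reflexive: every `t`-(von Neumann-)bounded set is relatively compact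
for the weak topology `σ(X,(X,t)')`. -/
def SemiReflexiveTop (t : TopologicalSpace X) : Prop :=
  ∀ S : Set X, @Bornology.IsVonNBounded ℝ X _ _ _ t S →
    @IsCompact X (weakTopOf t) (@closure X (weakTopOf t) S)

/-- A set is sequentially open for the topology `t`. -/
def SeqOpenSet (t : TopologicalSpace X) (s : Set X) : Prop :=
  ∀ (u : ℕ → X) (x : X), x ∈ s → Filter.Tendsto u atTop (@nhds X t x) →
    ∀ᶠ n in atTop, u n ∈ s

/-- `(X,t)` is C-sequential: every convex sequentially open set is open. -/
def CSequentialTop (t : TopologicalSpace X) : Prop :=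
  ∀ s : Set X, Convex ℝ s → SeqOpenSet t s → @IsOpen X t s

end Defs

section Resolvent

open Function
open scoped NNReal

theorem LinearMap.surjective_add_smul_of_antilipschitz {𝕜 E F : Type*} [NormedField 𝕜]
    [SeminormedAddCommGroup E] [Module 𝕜 E] [NormedAddCommGroup F] [NormedSpace 𝕜 F]
    [CompleteSpace F] {T J : E →ₗ[𝕜] F} {K L : ℝ≥0} (hT : AntilipschitzWith K T)
    (hTs : Surjective T) (hJ : LipschitzWith L J) {μ : 𝕜} (hμ : ‖μ‖₊ * K * L < 1) :
    Surjective (T + μ • J) := by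
  intro y
  set R := surjInv hTs
  set Φ : F → F := fun z => J (R (y - μ • z))
  have hΦ : ContractingWith (‖μ‖₊ * K * L) Φ := by
    refine ⟨hμ, LipschitzWith.of_dist_le_mul fun a b => ?_⟩
    calc dist (Φ a) (Φ b) ≤ L * dist (R (y - μ • a)) (R (y - μ • b)) := hJ.dist_le_mul _ _
      _ ≤ L * (K * dist (y - μ • a) (y - μ • b)) := by
          gcongr
          simpa only [R, surjInv_eq] using hT.le_mul_dist (R (y - μ • a)) (R (y - μ • b))
      _ = ‖μ‖₊ * K * L * dist a b := by
          rw [dist_sub_left, dist_smul₀]; push_cast; ring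
  have : Nonempty F := ⟨0⟩
  set z := ContractingWith.fixedPoint Φ hΦ
  have hz : J (R (y - μ • z)) = z := hΦ.fixedPoint_isFixedPt
  refine ⟨R (y - μ • z), ?_⟩
  rw [LinearMap.add_apply, LinearMap.smul_apply, hz, surjInv_eq hTs]
  abel

theorem Ioi_subset_of_forall_Ioo_two_mul_subset {S : Set ℝ} {l₀ : ℝ} (hl₀ : 0 < l₀)
    (h₀ : l₀ ∈ S) (hS : ∀ l ∈ S, 0 < l → Ioo 0 (2 * l) ⊆ S) : Ioi 0 ⊆ S := by
  have hpow : ∀ n : ℕ, (3 / 2 : ℝ) ^ n * l₀ ∈ S := by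
    intro n
    induction n with
    | zero => simpa using h₀
    | succ n ih =>
      have hpos : 0 < (3 / 2 : ℝ) ^ n * l₀ := by positivity
      exact hS _ ih hpos ⟨by positivity, by rw [pow_succ]; linarith⟩
  intro l hl
  obtain ⟨n, hn⟩ := pow_unbounded_of_one_lt (l / l₀) (by norm_num : (1 : ℝ) < 3 / 2)
  have hpos : 0 < (3 / 2 : ℝ) ^ n * l₀ := by positivity
  rw [div_lt_iff₀ hl₀] at hn
  exact hS _ (hpow n) hpos ⟨hl, by linarith⟩

variable [NormedAddCommGroup X] [NormedSpace ℝ X]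

theorem NormingSeminorms.le_norm {Γ : Set (Seminorm ℝ X)} (hΓ : NormingSeminorms Γ)
    {p : Seminorm ℝ X} (hp : p ∈ Γ) (x : X) : p x ≤ ‖x‖ := by
  by_cases hb : BddAbove (range fun q : Γ => (q : Seminorm ℝ X) x)
  · rw [hΓ x]
    exact le_ciSup hb ⟨p, hp⟩
  · have hx : x = 0 := norm_eq_zero.mp (by rw [hΓ x]; exact Real.iSup_of_not_bddAbove hb)
    simp [hx]

variable {Γ : Set (Seminorm ℝ X)} {D : Submodule ℝ X} {A : D →ₗ[ℝ] X} {l₀ l : ℝ}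

theorem GammaDissipative.norm_le_inv_mul (hdiss : GammaDissipative Γ D A)
    (hΓ : NormingSeminorms Γ) (hl : 0 < l) (x : D) : ‖(x : X)‖ ≤ l⁻¹ * ‖lmap D A l x‖ := by
  rw [← div_eq_inv_mul, le_div_iff₀' hl, hΓ (x : X), Real.mul_iSup_of_nonneg hl.le]
  exact Real.iSup_le (fun p => (hdiss l hl x p p.2).trans (hΓ.le_norm p.2 _)) (norm_nonneg _)

theorem GammaDissipative.antilipschitz (hdiss : GammaDissipative Γ D A)
    (hΓ : NormingSeminorms Γ) (hl : 0 < l) :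
    AntilipschitzWith ⟨l⁻¹, inv_nonneg.2 hl.le⟩ (l • D.subtype - A) :=
  AddMonoidHomClass.antilipschitz_of_bound _ (hdiss.norm_le_inv_mul hΓ hl)

theorem GammaDissipative.surjective_of_mem_Ioo [CompleteSpace X] (hdiss : GammaDissipative Γ D A)
    (hΓ : NormingSeminorms Γ) (hl₀ : 0 < l₀) (hs : Surjective (lmap D A l₀))
    (hl : l ∈ Ioo 0 (2 * l₀)) : Surjective (lmap D A l) := by
  have hsplit : lmap D A l = ⇑(l₀ • D.subtype - A + (l - l₀) • D.subtype) := by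
    funext x
    simp only [lmap, LinearMap.add_apply, LinearMap.sub_apply, LinearMap.smul_apply,
      Submodule.subtype_apply]
    module
  have hcontr : ‖l - l₀‖₊ * ⟨l₀⁻¹, inv_nonneg.2 hl₀.le⟩ * 1 < 1 := by
    rw [← NNReal.coe_lt_coe]
    show |l - l₀| * l₀⁻¹ * 1 < 1
    rw [mul_one, ← div_eq_mul_inv, div_lt_one hl₀, abs_sub_lt_iff]
    constructor <;> linarith [hl.1, hl.2]
  rw [hsplit]
  exact LinearMap.surjective_add_smul_of_antilipschitz (hdiss.antilipschitz hΓ hl₀) hs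
    (Isometry.lipschitz fun _ _ => rfl) hcontr

theorem GammaDissipative.surjective_of_surjective [CompleteSpace X]
    (hdiss : GammaDissipative Γ D A) (hΓ : NormingSeminorms Γ) (hl₀ : 0 < l₀)
    (hs : Surjective (lmap D A l₀)) (hl : 0 < l) : Surjective (lmap D A l) :=
  Ioi_subset_of_forall_Ioo_two_mul_subset (S := {l | Surjective (lmap D A l)}) hl₀ hs
    (fun _ hm hm₀ _ hl => hdiss.surjective_of_mem_Ioo hΓ hm₀ hm hl) hl

end Resolvent

namespace Statements

open LumerPhillips Filter Topology Set

variable {X : Type*}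

theorem statement6_general [NormedAddCommGroup X] [NormedSpace ℝ X] [CompleteSpace X]
    (Γυ : Set (Seminorm ℝ X))
    (hnorm : NormingSeminorms Γυ)
    (D : Submodule ℝ X) (A : D →ₗ[ℝ] X)
    (hdiss : GammaDissipative Γυ D A) :
    ((∃ l : ℝ, 0 < l ∧ Function.Surjective (lmap D A l)) ↔
        ∀ l : ℝ, 0 < l → Function.Surjective (lmap D A l)) ∧
      ((∃ l : ℝ, 0 < l ∧ Function.Surjective (lmap D A l)) →
        ∀ l : ℝ, 0 < l → Function.Bijective (lmap D A l) ∧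
          ∃ C : ℝ, ∀ x : D, ‖(x : X)‖ ≤ C * ‖lmap D A l x‖) := by
  have hsurj : ∀ l₀, 0 < l₀ → Function.Surjective (lmap D A l₀) →
      ∀ l, 0 < l → Function.Surjective (lmap D A l) :=
    fun _ hl₀ hs _ hl => hdiss.surjective_of_surjective hnorm hl₀ hs hl
  refine ⟨⟨fun ⟨l₀, hl₀, hs⟩ => hsurj l₀ hl₀ hs, fun h => ⟨1, one_pos, h 1 one_pos⟩⟩, ?_⟩
  rintro ⟨l₀, hl₀, hs⟩ l hl
  exact ⟨⟨(hdiss.antilipschitz hnorm hl).injective, hsurj l₀ hl₀ hs l hl⟩, l⁻¹,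
    hdiss.norm_le_inv_mul hnorm hl⟩

theorem statement6 [NormedAddCommGroup X] [NormedSpace ℝ X] [CompleteSpace X]
    (τ γ υ : TopologicalSpace X) (Γτ Γυ : Set (Seminorm ℝ X))
    (hSaks : IsSaksSystem τ Γτ) (hmixed : IsMixedTopology τ γ) (hseq : SeqCompleteTop γ)
    (hυ2 : @T2Space X υ) (hυlc : @LocallyConvexSpace ℝ X _ _ _ _ υ)
    (hdir : DirectedSeminorms Γυ) (hgen : GeneratesTop Γυ υ) (hnorm : NormingSeminorms Γυ)
    (D : Submodule ℝ X) (A : D →ₗ[ℝ] X)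
    (hdiss : GammaDissipative Γυ D A) :
    ((∃ l : ℝ, 0 < l ∧ Function.Surjective (lmap D A l)) ↔
        ∀ l : ℝ, 0 < l → Function.Surjective (lmap D A l)) ∧
      ((∃ l : ℝ, 0 < l ∧ Function.Surjective (lmap D A l)) →
        ∀ l : ℝ, 0 < l → Function.Bijective (lmap D A l) ∧
          ∃ C : ℝ, ∀ x : D, ‖(x : X)‖ ≤ C * ‖lmap D A l x‖) :=
  statement6_general Γυ hnorm D A hdiss

end Statements
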